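/- Fix a parameter μ and an integer sequence (e_k), and define f_n(y) = χ_{M_n}(2y + μ) where χ_{M_n} is the characteristic polynomial of the n×n tridiagonal matrix with diagonal (e_0,...,e_{n-1}) and sub/super-diagonals 1 (χ_{M_0} = 1). Then for every n ≥ 0: f_n = U_n + Σ_{k=0}^{n-1} (μ - e_k)·f_k·U_{n-k-1}, where (U_n) are the Chebyshev polynomials of the second kind. -/

import Mathlib

/-!
Expanding `det (X - M_{n+2})` along its last row gives the recurrence
`f_{n+2} = 2y f_{n+1} - f_n + (μ - e_{n+1}) f_{n+1}`, with `f_0 = 1` and `f_1 = 2y + (μ - e_0)`: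
the Chebyshev recurrence perturbed by the forcing term `(μ - e_k) f_k`. By Duhamel's principle the
solution is the unperturbed solution `U_n` plus each forcing term propagated by `U`.
-/

open Polynomial

/-- The `n × n` tridiagonal matrix with diagonal entries `e 0, …, e (n-1)` and
sub- and super-diagonal entries equal to `1`. -/
def triM (e : ℕ → ℤ) (n : ℕ) : Matrix (Fin n) (Fin n) ℝ :=
  Matrix.of fun i j =>
    if (i : ℕ) = (j : ℕ) then (e i : ℝ)
    else if (i : ℕ) + 1 = (j : ℕ) ∨ (j : ℕ) + 1 = (i : ℕ) then 1 else 0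

/-- Chebyshev polynomials of the second kind (over `ℝ`). -/
noncomputable def chebU : ℕ → Polynomial ℝ
  | 0 => 1
  | 1 => 2 * X
  | n + 2 => 2 * X * chebU (n + 1) - chebU n

/-- The shifted characteristic polynomial `f_n(y) = χ_{M_n}(2y + μ)`. -/
noncomputable def fShift (e : ℕ → ℤ) (μ : ℝ) (n : ℕ) : Polynomial ℝ :=
  ((triM e n).charpoly).comp (2 * X + C μ)

section LinearRecurrence

variable {R : Type*} [CommRing R]

theorem eq_add_sum_mul_of_perturbed_recurrence (x q : R) {U f g : ℕ → R}
    (hU0 : U 0 = 1) (hU1 : U 1 = x) (hU : ∀ n, U (n + 2) = x * U (n + 1) - q * U n)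
    (hf0 : f 0 = 1) (hf1 : f 1 = x + g 0)
    (hf : ∀ n, f (n + 2) = x * f (n + 1) - q * f n + g (n + 1)) (n : ℕ) :
    f n = U n + ∑ k ∈ Finset.range n, g k * U (n - k - 1) := by
  set S : ℕ → R := fun n => U n + ∑ k ∈ Finset.range n, g k * U (n - k - 1) with hS
  have hS_succ_succ : ∀ n, S (n + 2) = x * S (n + 1) - q * S n + g (n + 1) := by
    intro n
    have hterm : ∀ k ∈ Finset.range n, g k * U (n + 2 - k - 1) =
        x * (g k * U (n + 1 - k - 1)) - q * (g k * U (n - k - 1)) := by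
      intro k hk
      obtain ⟨j, rfl⟩ := Nat.exists_eq_add_of_lt (Finset.mem_range.mp hk)
      rw [show k + j + 1 + 2 - k - 1 = j + 2 by omega, show k + j + 1 + 1 - k - 1 = j + 1 by omega,
        show k + j + 1 - k - 1 = j by omega, hU]
      ring
    simp only [hS, Finset.sum_range_succ, Finset.sum_congr rfl hterm, Finset.sum_sub_distrib,
      ← Finset.mul_sum, show n + 2 - n - 1 = 1 by omega, show n + 1 - n - 1 = 0 by omega,
      show n + 2 - (n + 1) - 1 = 0 by omega, hU, hU0, hU1]
    ring
  induction n using Nat.twoStepInduction with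
  | zero => simp [hf0, hU0]
  | one => simp [hf1, hU0, hU1]
  | more n ih₀ ih₁ => rw [hf, ih₀, ih₁]; exact (hS_succ_succ n).symm

end LinearRecurrence

section Tridiagonal

variable {R : Type*} [CommRing R]

def tridiag (d : ℕ → R) (c : R) (n : ℕ) : Matrix (Fin n) (Fin n) R :=
  Matrix.of fun i j =>
    if (i : ℕ) = j then d i else if (i : ℕ) + 1 = j ∨ (j : ℕ) + 1 = i then c else 0

theorem tridiag_apply_of_lt {n : ℕ} (d : ℕ → R) (c : R) {i j : Fin n}
    (h : (i : ℕ) + 1 < j ∨ (j : ℕ) + 1 < i) : tridiag d c n i j = 0 := by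
  simp only [tridiag, Matrix.of_apply]
  rw [if_neg (by omega), if_neg (by omega)]

theorem tridiag_submatrix {m n : ℕ} (d : ℕ → R) (c : R) {r s : Fin n → Fin m}
    (hr : ∀ i, (r i : ℕ) = i) (hs : ∀ j, (s j : ℕ) = j) :
    (tridiag d c m).submatrix r s = tridiag d c n := by
  ext i j
  simp [tridiag, hr, hs]

theorem tridiag_submatrix_castSucc (d : ℕ → R) (c : R) (n : ℕ) :
    (tridiag d c (n + 1)).submatrix Fin.castSucc Fin.castSucc = tridiag d c n :=
  tridiag_submatrix d c (fun _ => rfl) (fun _ => rfl)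

theorem Matrix.det_succ_of_col_last_eq_zero {n : ℕ} (A : Matrix (Fin (n + 1)) (Fin (n + 1)) R)
    (hA : ∀ i : Fin n, A i.castSucc (Fin.last n) = 0) :
    A.det = A (Fin.last n) (Fin.last n) * (A.submatrix Fin.castSucc Fin.castSucc).det := by
  rw [Matrix.det_succ_column A (Fin.last n), Fin.sum_univ_castSucc]
  simp [hA, Fin.succAbove_last, ← two_mul, pow_mul]

theorem det_tridiag_one (d : ℕ → R) (c : R) : (tridiag d c 1).det = d 0 := by
  simp [tridiag]

theorem det_tridiag_succ_succ (d : ℕ → R) (c : R) (n : ℕ) :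
    (tridiag d c (n + 2)).det =
      d (n + 1) * (tridiag d c (n + 1)).det - c ^ 2 * (tridiag d c n).det := by
  -- the last column of this minor is `c` at the bottom and zero elsewhere
  have hminor : ((tridiag d c (n + 2)).submatrix Fin.castSucc
      (Fin.last n).castSucc.succAbove).det = c * (tridiag d c n).det := by
    have hsub : (tridiag d c (n + 2)).submatrix (Fin.castSucc ∘ Fin.castSucc)
        ((Fin.last n).castSucc.succAbove ∘ Fin.castSucc) = tridiag d c n :=
      tridiag_submatrix d c (fun _ => rfl)
        (fun j => by simp [Fin.succAbove_castSucc_of_lt, Fin.lt_def])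
    rw [Matrix.det_succ_of_col_last_eq_zero, Matrix.submatrix_submatrix, hsub]
    · simp [tridiag]
    · exact fun i => tridiag_apply_of_lt d c (by simp)
  have hdiag : tridiag d c (n + 2) (Fin.last (n + 1)) (Fin.last (n + 1)) = d (n + 1) := by
    simp [tridiag]
  have hoff : tridiag d c (n + 2) (Fin.last (n + 1)) (Fin.last n).castSucc = c := by
    simp [tridiag]
  rw [Matrix.det_succ_row _ (Fin.last (n + 1)), Fin.sum_univ_castSucc, Fin.sum_univ_castSucc,
    Finset.sum_eq_zero fun i _ => by rw [tridiag_apply_of_lt d c (by simp), mul_zero, zero_mul]]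
  simp only [Fin.succAbove_last, hminor, tridiag_submatrix_castSucc, hdiag, hoff, Fin.val_last,
    Fin.val_castSucc, Nat.succ_eq_add_one, odd_add_one_self, Odd.neg_one_pow, Even.add_self,
    Even.neg_pow, one_pow, zero_add]
  ring

theorem charmatrix_tridiag (d : ℕ → R) (c : R) (n : ℕ) :
    (tridiag d c n).charmatrix = tridiag (fun k => X - C (d k)) (-C c) n := by
  ext i j
  by_cases h : i = j
  · subst h
    simp [tridiag, Matrix.charmatrix_apply_eq]
  · simp only [tridiag, Matrix.charmatrix_apply_ne _ _ _ h, Matrix.of_apply, Fin.val_ne_of_ne h,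
      if_false]
    split_ifs <;> simp

theorem charpoly_tridiag_zero (d : ℕ → R) (c : R) : (tridiag d c 0).charpoly = 1 :=
  Matrix.det_isEmpty

theorem charpoly_tridiag_one (d : ℕ → R) (c : R) : (tridiag d c 1).charpoly = X - C (d 0) := by
  rw [Matrix.charpoly, charmatrix_tridiag, det_tridiag_one]

theorem charpoly_tridiag_succ_succ (d : ℕ → R) (c : R) (n : ℕ) :
    (tridiag d c (n + 2)).charpoly =
      (X - C (d (n + 1))) * (tridiag d c (n + 1)).charpoly -
        C c ^ 2 * (tridiag d c n).charpoly := by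
  simp only [Matrix.charpoly, charmatrix_tridiag, det_tridiag_succ_succ, neg_sq]

end Tridiagonal

theorem triM_eq_tridiag (e : ℕ → ℤ) (n : ℕ) : triM e n = tridiag (fun k => (e k : ℝ)) 1 n := rfl

theorem fShift_zero (e : ℕ → ℤ) (μ : ℝ) : fShift e μ 0 = 1 := by
  rw [fShift, triM_eq_tridiag, charpoly_tridiag_zero, one_comp]

theorem fShift_one (e : ℕ → ℤ) (μ : ℝ) : fShift e μ 1 = 2 * X + C (μ - e 0) := by
  rw [fShift, triM_eq_tridiag, charpoly_tridiag_one, sub_comp, X_comp, C_comp, C_sub]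
  ring

theorem fShift_succ_succ (e : ℕ → ℤ) (μ : ℝ) (n : ℕ) :
    fShift e μ (n + 2) = (2 * X + C (μ - e (n + 1))) * fShift e μ (n + 1) - fShift e μ n := by
  simp only [fShift, triM_eq_tridiag, charpoly_tridiag_succ_succ, sub_comp, mul_comp, X_comp,
    C_comp, C_1, one_pow, one_mul, C_sub]
  ring

theorem stmt18 (e : ℕ → ℤ) (μ : ℝ) (n : ℕ) :
    fShift e μ n =
      chebU n + ∑ k ∈ Finset.range n,
        C (μ - (e k : ℝ)) * fShift e μ k * chebU (n - k - 1) :=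
  eq_add_sum_mul_of_perturbed_recurrence (2 * X) 1 rfl rfl (fun n => by rw [one_mul]; rfl)
    (fShift_zero e μ) (by rw [fShift_one, fShift_zero, mul_one])
    (fun n => by rw [fShift_succ_succ]; ring) n
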